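/- arXiv:math/9810045 — 5 statements merged into one kernel-verified Lean document; each statement's English description precedes it below -/
import Mathlib

section
/- Let C be a braided monoidal category with braiding β_{X,Y} : X ⊗ Y ≅ Y ⊗ X, and suppose every object of C is invertible, i.e. for every object X there is an object X′ together with isomorphisms X ⊗ X′ ≅ 𝟙 and X′ ⊗ X ≅ 𝟙. If β_{X,X} is the identity morphism of X ⊗ X for every object X, then the braiding is a symmetry: β_{X,Y} ≫ β_{Y,X} is the identity of X ⊗ Y for all objects X, Y (so C is a symmetric monoidal category). -/
open CategoryTheory MonoidalCategory

private theorem aux_wl_cancel {C : Type*} [Category C] [MonoidalCategory C]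
    {X X' A B : C} (e : X' ⊗ X ≅ 𝟙_ C) {f g : A ⟶ B}
    (h : X ◁ f = X ◁ g) : f = g := by
  have h2 : (X' ⊗ X) ◁ f = (X' ⊗ X) ◁ g := by
    rw [tensor_whiskerLeft, tensor_whiskerLeft, h]
  have h3 : e.hom ▷ A ≫ 𝟙_ C ◁ f = e.hom ▷ A ≫ 𝟙_ C ◁ g := by
    rw [← whisker_exchange, ← whisker_exchange, h2]
  simp only [MonoidalCategory.id_whiskerLeft] at h3
  rw [cancel_epi (e.hom ▷ A), cancel_epi (λ_ A).hom, cancel_mono (λ_ B).inv] at h3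
  exact h3

private theorem aux_wr_cancel {C : Type*} [Category C] [MonoidalCategory C]
    {Y Y' A B : C} (e : Y ⊗ Y' ≅ 𝟙_ C) {f g : A ⟶ B}
    (h : f ▷ Y = g ▷ Y) : f = g := by
  have h2 : f ▷ (Y ⊗ Y') = g ▷ (Y ⊗ Y') := by
    rw [whiskerRight_tensor, whiskerRight_tensor, h]
  have h3 : A ◁ e.hom ≫ f ▷ 𝟙_ C = A ◁ e.hom ≫ g ▷ 𝟙_ C := by
    rw [whisker_exchange, whisker_exchange, h2]
  simp only [MonoidalCategory.whiskerRight_id] at h3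
  rw [cancel_epi (A ◁ e.hom), cancel_epi (ρ_ A).hom, cancel_mono (ρ_ B).inv] at h3
  exact h3

private theorem aux_key {C : Type*} [Category C] [MonoidalCategory C] [BraidedCategory C]
    (hself : ∀ X : C, (β_ X X).hom = 𝟙 (X ⊗ X)) (X Y : C) :
    (X ◁ ((β_ Y X).hom ≫ (β_ X Y).hom)) ▷ Y = 𝟙 _ := by
  have h := hself (X ⊗ Y)
  rw [BraidedCategory.braiding_tensor_left_hom, BraidedCategory.braiding_tensor_right_hom,
    BraidedCategory.braiding_tensor_right_hom, hself X, hself Y] at h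
  simp only [MonoidalCategory.whiskerLeft_comp, MonoidalCategory.comp_whiskerRight,
    MonoidalCategory.whiskerLeft_id, MonoidalCategory.id_whiskerRight,
    Category.id_comp, Category.comp_id, Category.assoc] at h
  rw [← cancel_epi ((α_ X Y (X ⊗ Y)).hom ≫ X ◁ (α_ Y X Y).inv ≫ (α_ X (Y ⊗ X) Y).inv),
      ← cancel_mono ((α_ X Y X).inv ▷ Y ≫ (α_ (X ⊗ Y) X Y).hom)]
  have hRHS : (α_ X Y (X ⊗ Y)).hom ≫ X ◁ (α_ Y X Y).inv ≫ (α_ X (Y ⊗ X) Y).inv ≫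
      (α_ X Y X).inv ▷ Y ≫ (α_ (X ⊗ Y) X Y).hom = 𝟙 _ := by monoidal
  simp only [Category.assoc, MonoidalCategory.whiskerLeft_comp,
    MonoidalCategory.comp_whiskerRight, whisker_assoc, Category.comp_id, Category.id_comp,
    Iso.inv_hom_id_assoc] at h hRHS ⊢
  rw [hRHS]
  simp only [inv_hom_whiskerRight_assoc, Iso.inv_hom_id_assoc,
    MonoidalCategory.whiskerLeft_hom_inv_assoc] at h
  exact h

/-- In a braided monoidal category in which every object is invertible, if the
self-braiding `β_{X,X}` is the identity for every object `X`, then the braiding is a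
symmetry: `β_{X,Y} ≫ β_{Y,X} = 𝟙` for all objects `X, Y`. -/
theorem braiding_symmetry_of_self_braiding_id {C : Type*} [Category C] [MonoidalCategory C]
    [BraidedCategory C]
    (hinv : ∀ X : C, ∃ X' : C, Nonempty (X ⊗ X' ≅ 𝟙_ C) ∧ Nonempty (X' ⊗ X ≅ 𝟙_ C))
    (hself : ∀ X : C, (β_ X X).hom = 𝟙 (X ⊗ X)) :
    ∀ X Y : C, (β_ X Y).hom ≫ (β_ Y X).hom = 𝟙 (X ⊗ Y) := by
  intro X Y
  obtain ⟨X', ⟨eX⟩, _⟩ := hinv X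
  obtain ⟨Y', _, ⟨eY'⟩⟩ := hinv Y
  apply aux_wl_cancel eY'
  apply aux_wr_cancel eX
  simpa using aux_key hself Y X
end

section
/- Let C be a monoidal category and let X be an invertible object of C, i.e. there is an object X′ together with isomorphisms X ⊗ X′ ≅ 𝟙 and X′ ⊗ X ≅ 𝟙. Then the endomorphism monoid End(X) is commutative: f ≫ g = g ≫ f for all morphisms f, g : X → X. -/
open CategoryTheory MonoidalCategory

theorem unit_end_comm {C : Type*} [Category C] [MonoidalCategory C]
    (u v : 𝟙_ C ⟶ 𝟙_ C) : u ≫ v = v ≫ u := by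
  have h1 : u ▷ (𝟙_ C) ≫ (𝟙_ C) ◁ v = (𝟙_ C) ◁ v ≫ u ▷ (𝟙_ C) :=
    (whisker_exchange u v).symm
  have h2 : u ▷ (𝟙_ C) = (ρ_ (𝟙_ C)).hom ≫ u ≫ (ρ_ (𝟙_ C)).inv := by
    rw [← MonoidalCategory.whiskerRight_iff]; simp
  have h3 : (𝟙_ C) ◁ v = (λ_ (𝟙_ C)).hom ≫ v ≫ (λ_ (𝟙_ C)).inv := by
    rw [← MonoidalCategory.whiskerLeft_iff]; simp
  rw [h2, h3] at h1
  simp only [unitors_equal, unitors_inv_equal, Category.assoc] at h1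
  simpa using h1

/-- The endomorphism monoid of an invertible object `X` of a monoidal category
(there is `X'` with `X ⊗ X' ≅ 𝟙` and `X' ⊗ X ≅ 𝟙`) is commutative. -/
theorem end_commutative_of_invertible {C : Type*} [Category C] [MonoidalCategory C]
    (X X' : C) (e₁ : X ⊗ X' ≅ 𝟙_ C) (e₂ : X' ⊗ X ≅ 𝟙_ C) :
    ∀ f g : X ⟶ X, f ≫ g = g ≫ f := by
  intro f g
  have key : ∀ h : X ⟶ X, h = (ρ_ X).inv ≫ X ◁ e₂.inv ≫ (α_ X X' X).inv ≫
      (h ▷ X') ▷ X ≫ (α_ X X' X).hom ≫ X ◁ e₂.hom ≫ (ρ_ X).hom := by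
    intro h
    have h1 : (h ▷ X') ▷ X ≫ (α_ X X' X).hom = (α_ X X' X).hom ≫ h ▷ (X' ⊗ X) := by
      simp [associator_naturality]
    rw [reassoc_of% h1, Iso.inv_hom_id_assoc]
    have h2 : X ◁ e₂.inv ≫ h ▷ (X' ⊗ X) = h ▷ (𝟙_ C) ≫ X ◁ e₂.inv :=
      whisker_exchange h e₂.inv
    rw [reassoc_of% h2]
    simp
  have comm : (f ≫ g) ▷ X' = (g ≫ f) ▷ X' := by
    have hΦ : e₁.inv ≫ (f ≫ g) ▷ X' ≫ e₁.hom = e₁.inv ≫ (g ≫ f) ▷ X' ≫ e₁.hom := by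
      have := unit_end_comm (e₁.inv ≫ f ▷ X' ≫ e₁.hom) (e₁.inv ≫ g ▷ X' ≫ e₁.hom)
      simpa [comp_whiskerRight] using this
    have := congrArg (fun t => e₁.hom ≫ t ≫ e₁.inv) hΦ
    simpa using this
  calc f ≫ g = (ρ_ X).inv ≫ X ◁ e₂.inv ≫ (α_ X X' X).inv ≫
      ((f ≫ g) ▷ X') ▷ X ≫ (α_ X X' X).hom ≫ X ◁ e₂.hom ≫ (ρ_ X).hom := key _
    _ = (ρ_ X).inv ≫ X ◁ e₂.inv ≫ (α_ X X' X).inv ≫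
      ((g ≫ f) ▷ X') ▷ X ≫ (α_ X X' X).hom ≫ X ◁ e₂.hom ≫ (ρ_ X).hom := by rw [comm]
    _ = g ≫ f := (key _).symm
end

section
/- Let C be a braided monoidal category with braiding β_{X,Y} : X ⊗ Y ≅ Y ⊗ X, let X and Y be objects of C, and let e : X ⊗ Y ≅ 𝟙 be an isomorphism. Let u : (X ⊗ X) ⊗ (Y ⊗ Y) ≅ 𝟙 be the isomorphism obtained by reassociating to X ⊗ ((X ⊗ Y) ⊗ Y), contracting the inner factor X ⊗ Y with e and the unitor to get X ⊗ Y, and then applying e again. Then the two endomorphisms of the unit object 𝟙 given by u⁻¹ ≫ (β_{X,X} ⊗ 𝟙_{Y⊗Y}) ≫ u and u⁻¹ ≫ (𝟙_{X⊗X} ⊗ β_{Y,Y}) ≫ u are equal. (This expresses that the Joyal–Street invariant satisfies τ(x) = τ(−x).) -/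
open CategoryTheory MonoidalCategory

/-- Let `C` be a braided monoidal category, `X Y : C`, and `e : X ⊗ Y ≅ 𝟙`. Let
`u : (X ⊗ X) ⊗ (Y ⊗ Y) ≅ 𝟙` be obtained by reassociating to `X ⊗ ((X ⊗ Y) ⊗ Y)`,
contracting the inner `X ⊗ Y` via `e` and the left unitor, and applying `e` again.
Then conjugating `β_{X,X} ⊗ 𝟙` and `𝟙 ⊗ β_{Y,Y}` by `u` yields the same endomorphism
of the unit object (`τ(x) = τ(-x)` for the Joyal–Street invariant). -/
theorem self_braiding_conjugates_agree {C : Type*} [Category C] [MonoidalCategory C]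
    [BraidedCategory C] (X Y : C) (e : X ⊗ Y ≅ 𝟙_ C) :
    let u : (X ⊗ X) ⊗ (Y ⊗ Y) ≅ 𝟙_ C :=
      α_ X X (Y ⊗ Y) ≪≫
        whiskerLeftIso X ((α_ X Y Y).symm ≪≫ whiskerRightIso e Y ≪≫ λ_ Y) ≪≫ e
    u.inv ≫ ((β_ X X).hom ⊗ₘ 𝟙 (Y ⊗ Y)) ≫ u.hom =
      u.inv ≫ (𝟙 (X ⊗ X) ⊗ₘ (β_ Y Y).hom) ≫ u.hom := by
  intro u
  open BraidedCategory in
  have lemA : (ρ_ X).inv ≫ (X ◁ e.inv) ≫ (α_ X X Y).inv ≫ ((β_ X X).hom ▷ Y) ≫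
      (α_ X X Y).hom ≫ (X ◁ e.hom) ≫ (ρ_ X).hom =
      (λ_ X).inv ≫ (e.inv ▷ X) ≫ (α_ X Y X).hom ≫ (X ◁ ((β_ X Y).inv ≫ e.hom)) ≫ (ρ_ X).hom := by
    have h1 : (β_ X (X ⊗ Y)).hom = (X ◁ e.hom) ≫ (ρ_ X).hom ≫ (λ_ X).inv ≫ (e.inv ▷ X) := by
      rw [← cancel_mono (e.hom ▷ X)]
      have h := braiding_naturality_right X e.hom
      rw [braiding_tensorUnit_right] at h
      simp only [Category.assoc, inv_hom_whiskerRight, Category.comp_id]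
      exact h.symm
    rw [braiding_tensor_right_hom] at h1
    calc (ρ_ X).inv ≫ (X ◁ e.inv) ≫ (α_ X X Y).inv ≫ ((β_ X X).hom ▷ Y) ≫
        (α_ X X Y).hom ≫ (X ◁ e.hom) ≫ (ρ_ X).hom
        = (ρ_ X).inv ≫ (X ◁ e.inv) ≫ ((α_ X X Y).inv ≫ ((β_ X X).hom ▷ Y) ≫
          (α_ X X Y).hom ≫ (X ◁ (β_ X Y).hom) ≫ (α_ X Y X).inv) ≫ (α_ X Y X).hom ≫
          (X ◁ ((β_ X Y).inv ≫ e.hom)) ≫ (ρ_ X).hom := by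
          simp only [MonoidalCategory.whiskerLeft_comp, Category.assoc, Iso.inv_hom_id_assoc,
            whiskerLeft_hom_inv_assoc]
      _ = (ρ_ X).inv ≫ (X ◁ e.inv) ≫ ((X ◁ e.hom) ≫ (ρ_ X).hom ≫ (λ_ X).inv ≫ (e.inv ▷ X)) ≫
          (α_ X Y X).hom ≫ (X ◁ ((β_ X Y).inv ≫ e.hom)) ≫ (ρ_ X).hom := by rw [h1]
      _ = _ := by
          simp only [← Category.assoc]; congr 3
          simp only [Category.assoc, whiskerLeft_inv_hom_assoc, Iso.inv_hom_id_assoc]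
  have lemB : (λ_ Y).inv ≫ (e.inv ▷ Y) ≫ (α_ X Y Y).hom ≫ (X ◁ (β_ Y Y).hom) ≫
      (α_ X Y Y).inv ≫ (e.hom ▷ Y) ≫ (λ_ Y).hom =
      (ρ_ Y).inv ≫ (Y ◁ e.inv) ≫ (α_ Y X Y).inv ≫ (((β_ X Y).inv ≫ e.hom) ▷ Y) ≫ (λ_ Y).hom := by
    have h2 : (β_ (X ⊗ Y) Y).hom = (e.hom ▷ Y) ≫ (λ_ Y).hom ≫ (ρ_ Y).inv ≫ (Y ◁ e.inv) := by
      rw [← cancel_mono (Y ◁ e.hom)]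
      have h := braiding_naturality_left e.hom Y
      rw [braiding_tensorUnit_left] at h
      simp only [Category.assoc, whiskerLeft_inv_hom, Category.comp_id]
      exact h.symm
    rw [braiding_tensor_left_hom] at h2
    calc (λ_ Y).inv ≫ (e.inv ▷ Y) ≫ (α_ X Y Y).hom ≫ (X ◁ (β_ Y Y).hom) ≫
        (α_ X Y Y).inv ≫ (e.hom ▷ Y) ≫ (λ_ Y).hom
        = (λ_ Y).inv ≫ (e.inv ▷ Y) ≫ ((α_ X Y Y).hom ≫ (X ◁ (β_ Y Y).hom) ≫
          (α_ X Y Y).inv ≫ ((β_ X Y).hom ▷ Y) ≫ (α_ Y X Y).hom) ≫ (α_ Y X Y).inv ≫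
          (((β_ X Y).inv ≫ e.hom) ▷ Y) ≫ (λ_ Y).hom := by
          simp only [comp_whiskerRight, Category.assoc, Iso.hom_inv_id_assoc,
            hom_inv_whiskerRight_assoc]
      _ = (λ_ Y).inv ≫ (e.inv ▷ Y) ≫ ((e.hom ▷ Y) ≫ (λ_ Y).hom ≫ (ρ_ Y).inv ≫ (Y ◁ e.inv)) ≫
          (α_ Y X Y).inv ≫ (((β_ X Y).inv ≫ e.hom) ▷ Y) ≫ (λ_ Y).hom := by rw [h2]
      _ = _ := by
          simp only [← Category.assoc]; congr 4
          simp only [Category.assoc, inv_hom_whiskerRight_assoc, Iso.inv_hom_id_assoc]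
  calc u.inv ≫ ((β_ X X).hom ⊗ₘ 𝟙 (Y ⊗ Y)) ≫ u.hom
      = e.inv ≫ (((ρ_ X).inv ≫ (X ◁ e.inv) ≫ (α_ X X Y).inv ≫ ((β_ X X).hom ▷ Y) ≫
        (α_ X X Y).hom ≫ (X ◁ e.hom) ≫ (ρ_ X).hom) ▷ Y) ≫ e.hom := by
        show ((e.inv ≫ X ◁ (((λ_ Y).inv ≫ e.inv ▷ Y) ≫ (α_ X Y Y).hom)) ≫
            (α_ X X (Y ⊗ Y)).inv) ≫ ((β_ X X).hom ⊗ₘ 𝟙 (Y ⊗ Y)) ≫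
            ((α_ X X (Y ⊗ Y)).hom ≫ (X ◁ ((α_ X Y Y).inv ≫ (e.hom ▷ Y ≫ (λ_ Y).hom)) ≫ e.hom)) = _
        simp only [tensorHom_id]
        monoidal
    _ = e.inv ≫ (((λ_ X).inv ≫ (e.inv ▷ X) ≫ (α_ X Y X).hom ≫
        (X ◁ ((β_ X Y).inv ≫ e.hom)) ≫ (ρ_ X).hom) ▷ Y) ≫ e.hom := by rw [lemA]
    _ = (λ_ (𝟙_ C)).inv ≫ ((𝟙_ C) ◁ e.inv) ≫ (e.inv ▷ (X ⊗ Y)) ≫ (α_ X Y (X ⊗ Y)).hom ≫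
        (X ◁ (α_ Y X Y).inv) ≫ (X ◁ (((β_ X Y).inv ≫ e.hom) ▷ Y)) ≫ (X ◁ (λ_ Y).hom) ≫
        e.hom := by monoidal
    _ = (λ_ (𝟙_ C)).inv ≫ (e.inv ⊗ₘ e.inv) ≫ (α_ X Y (X ⊗ Y)).hom ≫
        (X ◁ (α_ Y X Y).inv) ≫ (X ◁ (((β_ X Y).inv ≫ e.hom) ▷ Y)) ≫ (X ◁ (λ_ Y).hom) ≫
        e.hom := by rw [tensorHom_def' e.inv e.inv]; simp only [Category.assoc]
    _ = (λ_ (𝟙_ C)).inv ≫ ((e.inv ▷ (𝟙_ C)) ≫ ((X ⊗ Y) ◁ e.inv)) ≫ (α_ X Y (X ⊗ Y)).hom ≫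
        (X ◁ (α_ Y X Y).inv) ≫ (X ◁ (((β_ X Y).inv ≫ e.hom) ▷ Y)) ≫ (X ◁ (λ_ Y).hom) ≫
        e.hom := by rw [← tensorHom_def e.inv e.inv]
    _ = e.inv ≫ (X ◁ ((ρ_ Y).inv ≫ (Y ◁ e.inv) ≫ (α_ Y X Y).inv ≫
        (((β_ X Y).inv ≫ e.hom) ▷ Y) ≫ (λ_ Y).hom)) ≫ e.hom := by monoidal
    _ = e.inv ≫ (X ◁ ((λ_ Y).inv ≫ (e.inv ▷ Y) ≫ (α_ X Y Y).hom ≫ (X ◁ (β_ Y Y).hom) ≫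
        (α_ X Y Y).inv ≫ (e.hom ▷ Y) ≫ (λ_ Y).hom)) ≫ e.hom := by rw [lemB]
    _ = u.inv ≫ (𝟙 (X ⊗ X) ⊗ₘ (β_ Y Y).hom) ≫ u.hom := by
        show _ = ((e.inv ≫ X ◁ (((λ_ Y).inv ≫ e.inv ▷ Y) ≫ (α_ X Y Y).hom)) ≫
            (α_ X X (Y ⊗ Y)).inv) ≫ (𝟙 (X ⊗ X) ⊗ₘ (β_ Y Y).hom) ≫
            ((α_ X X (Y ⊗ Y)).hom ≫ (X ◁ ((α_ X Y Y).inv ≫ (e.hom ▷ Y ≫ (λ_ Y).hom)) ≫ e.hom))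
        simp only [id_tensorHom]
        monoidal
end

section
/- Let B and A be abelian groups, and let Γ₂B denote the degree-2 homogeneous component of the divided power algebra of the ℤ-module B, with γ₂(x) the second divided power of x ∈ B. Then the map f ↦ (x ↦ f(γ₂(x))) is a bijection (indeed an isomorphism of abelian groups) from the group of additive homomorphisms Γ₂B → A onto the group of quadratic maps B → A, i.e. functions τ : B → A such that τ(−x) = τ(x) for all x and such that (x, y) ↦ τ(x + y) − τ(x) − τ(y) is biadditive. -/
set_option synthInstance.maxHeartbeats 1000000
set_option maxHeartbeats 1000000

open MvPolynomial

/-- The defining relations of the divided power algebra of the `ℤ`-module `B`: the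
variable `X (n, x)` represents the `n`-th divided power `γₙ(x)` of `x : B`. -/
inductive DividedPowerRel (B : Type) [AddCommGroup B] :
    MvPolynomial (ℕ × B) ℤ → MvPolynomial (ℕ × B) ℤ → Prop
  | zero (x : B) : DividedPowerRel B (X (0, x)) 1
  | smul (k : ℤ) (n : ℕ) (x : B) :
      DividedPowerRel B (X (n, k • x)) (k ^ n • X (n, x))
  | add (n : ℕ) (x y : B) :
      DividedPowerRel B (X (n, x + y))
        (∑ i ∈ Finset.range (n + 1), X (i, x) * X (n - i, y))
  | mul (m n : ℕ) (x : B) :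
      DividedPowerRel B (X (m, x) * X (n, x)) ((m + n).choose m • X (m + n, x))

/-- The divided power algebra `Γ_*(B)` of the `ℤ`-module `B`. -/
noncomputable abbrev DividedPowerAlgebra' (B : Type) [AddCommGroup B] : Type :=
  RingQuot (DividedPowerRel B)

variable (B : Type) [AddCommGroup B]

/-- `dp B n x` is the `n`-th divided power generator `γₙ(x)` of the divided power
algebra of `B`. -/
noncomputable def dp (n : ℕ) (x : B) : DividedPowerAlgebra' B :=
  RingQuot.mkAlgHom ℤ (DividedPowerRel B) (X (n, x))

/-- The degree-`n` homogeneous component `ΓₙB` of the divided power algebra of `B`,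
for its natural grading (in which `γₙ(x)` is homogeneous of degree `n`). -/
noncomputable def dpGrade (n : ℕ) : Submodule ℤ (DividedPowerAlgebra' B) :=
  Submodule.map (RingQuot.mkAlgHom ℤ (DividedPowerRel B)).toLinearMap
    (weightedHomogeneousSubmodule ℤ (Prod.fst : ℕ × B → ℕ) n)

theorem dp_mem_dpGrade (n : ℕ) (x : B) : dp B n x ∈ dpGrade B n :=
  ⟨X (n, x), isWeightedHomogeneous_X ℤ _ _, rfl⟩

theorem dp_mul_dp_mem_dpGrade (m n : ℕ) (x y : B) :
    dp B m x * dp B n y ∈ dpGrade B (m + n) :=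
  ⟨X (m, x) * X (n, y),
    (isWeightedHomogeneous_X ℤ _ _).mul (isWeightedHomogeneous_X ℤ _ _),
    map_mul (RingQuot.mkAlgHom ℤ (DividedPowerRel B)) _ _⟩

-- ### dp identities

theorem dp_zero' (x : B) : dp B 0 x = 1 := by
  rw [dp, RingQuot.mkAlgHom_rel ℤ (DividedPowerRel.zero x), map_one]

theorem dp_smul' (k : ℤ) (n : ℕ) (x : B) : dp B n (k • x) = k ^ n • dp B n x := by
  rw [dp, RingQuot.mkAlgHom_rel ℤ (DividedPowerRel.smul k n x), map_zsmul, dp]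

theorem dp_two_neg (x : B) : dp B 2 (-x) = dp B 2 x := by
  have := dp_smul' B (-1) 2 x
  simpa using this

theorem dp_one_add (x y : B) : dp B 1 (x + y) = dp B 1 x + dp B 1 y := by
  have := RingQuot.mkAlgHom_rel ℤ (DividedPowerRel.add 1 x y)
  rw [show dp B 1 (x + y) = RingQuot.mkAlgHom ℤ (DividedPowerRel B) (X (1, x + y)) from rfl,
    this]
  rw [Finset.sum_range_succ, Finset.sum_range_succ, Finset.sum_range_zero]
  simp only [zero_add, map_add, map_mul]
  show (dp B 0 x) * (dp B 1 y) + (dp B 1 x) * (dp B 0 y) = _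
  rw [dp_zero', dp_zero', one_mul, mul_one, add_comm]

theorem dp_two_add (x y : B) :
    dp B 2 (x + y) = dp B 2 y + dp B 1 x * dp B 1 y + dp B 2 x := by
  have := RingQuot.mkAlgHom_rel ℤ (DividedPowerRel.add 2 x y)
  rw [show dp B 2 (x + y) = RingQuot.mkAlgHom ℤ (DividedPowerRel B) (X (2, x + y)) from rfl,
    this]
  rw [Finset.sum_range_succ, Finset.sum_range_succ, Finset.sum_range_succ,
    Finset.sum_range_zero]
  simp only [zero_add, map_add, map_mul]
  show (dp B 0 x) * (dp B 2 y) + (dp B 1 x) * (dp B 1 y) + (dp B 2 x) * (dp B 0 y) = _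
  rw [dp_zero', dp_zero', one_mul, mul_one]

theorem dp_one_mul_dp_one (x : B) : dp B 1 x * dp B 1 x = 2 • dp B 2 x := by
  have := RingQuot.mkAlgHom_rel ℤ (DividedPowerRel.mul 1 1 x)
  rw [map_mul] at this
  show dp B 1 x * dp B 1 x = _
  rw [show (RingQuot.mkAlgHom ℤ (DividedPowerRel B)) (X (1, x)) = dp B 1 x from rfl] at this
  rw [this, map_nsmul]
  norm_num
  rfl

theorem dp1_mul_dp1_mem (x y : B) : dp B 1 x * dp B 1 y ∈ dpGrade B 2 := by
  have := dp_mul_dp_mem_dpGrade B 1 1 x y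
  norm_num at this
  exact this

-- ### generation of `dpGrade B 2` by the `dp B 2 x`

local notation "W" => (Finsupp.weight (Prod.fst : ℕ × B → ℕ))
local notation "mkQ" => (RingQuot.mkAlgHom ℤ (DividedPowerRel B))

theorem weight_single (a : ℕ × B) (k : ℕ) :
    (Finsupp.weight (Prod.fst : ℕ × B → ℕ)) (Finsupp.single a k) = k * a.1 := by
  rw [Finsupp.weight_apply, Finsupp.sum_single_index] <;> simp

theorem mk_monomial_weight_zero (d : (ℕ × B) →₀ ℕ)
    (hd : (Finsupp.weight (Prod.fst : ℕ × B → ℕ)) d = 0) :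
    mkQ (monomial d 1) = 1 := by
  induction d using Finsupp.induction with
  | zero => simp [monomial_zero', map_one]
  | single_add a k f ha hk ih =>
    rw [map_add, weight_single] at hd
    obtain ⟨x, y⟩ := a
    simp only at hd
    have hkx : k * x = 0 := by omega
    have hx : x = 0 := by
      rcases Nat.mul_eq_zero.mp hkx with h | h
      · exact absurd h hk
      · exact h
    subst hx
    rw [show monomial (Finsupp.single ((0 : ℕ), y) k + f) (1 : ℤ) =
        monomial (Finsupp.single ((0 : ℕ), y) k) 1 * monomial f 1 by
      rw [monomial_mul, one_mul]]
    rw [map_mul, ← X_pow_eq_monomial, map_pow]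
    rw [show mkQ (X ((0 : ℕ), y)) = dp B 0 y from rfl, dp_zero', one_pow, one_mul]
    exact ih (by omega)

theorem mk_monomial_weight_one (d : (ℕ × B) →₀ ℕ)
    (hd : (Finsupp.weight (Prod.fst : ℕ × B → ℕ)) d = 1) :
    ∃ y : B, mkQ (monomial d 1) = dp B 1 y := by
  induction d using Finsupp.induction with
  | zero => simp at hd
  | single_add a k f ha hk ih =>
    rw [map_add, weight_single] at hd
    obtain ⟨x, y⟩ := a
    simp only at hd
    rw [show monomial (Finsupp.single ((x : ℕ), y) k + f) (1 : ℤ) =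
        monomial (Finsupp.single ((x : ℕ), y) k) 1 * monomial f 1 by
      rw [monomial_mul, one_mul]]
    rw [map_mul, ← X_pow_eq_monomial, map_pow]
    have hxk : x ≤ k * x := Nat.le_mul_of_pos_left x (Nat.pos_of_ne_zero hk)
    have hkx : k ≤ k * x ∨ x = 0 := by
      rcases Nat.eq_zero_or_pos x with h | h
      · exact Or.inr h
      · exact Or.inl (Nat.le_mul_of_pos_right k h)
    have hle : k * x ≤ 1 := by omega
    have hx2 : x ≤ 1 := le_trans hxk hle
    interval_cases x
    · rw [show mkQ (X ((0 : ℕ), y)) = dp B 0 y from rfl, dp_zero', one_pow, one_mul]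
      exact ih (by omega)
    · have hk1 : k = 1 := by omega
      subst hk1
      have hf : W f = 0 := by omega
      rw [mk_monomial_weight_zero B f hf, mul_one, pow_one]
      exact ⟨y, rfl⟩

theorem mk_monomial_weight_two (d : (ℕ × B) →₀ ℕ)
    (hd : (Finsupp.weight (Prod.fst : ℕ × B → ℕ)) d = 2) :
    mkQ (monomial d 1) ∈ Submodule.span ℤ (Set.range fun z => dp B 2 z) := by
  induction d using Finsupp.induction with
  | zero => simp at hd
  | single_add a k f ha hk ih =>
    rw [map_add, weight_single] at hd
    obtain ⟨x, y⟩ := a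
    simp only at hd
    rw [show monomial (Finsupp.single ((x : ℕ), y) k + f) (1 : ℤ) =
        monomial (Finsupp.single ((x : ℕ), y) k) 1 * monomial f 1 by
      rw [monomial_mul, one_mul]]
    rw [map_mul, ← X_pow_eq_monomial, map_pow]
    have hxk : x ≤ k * x := Nat.le_mul_of_pos_left x (Nat.pos_of_ne_zero hk)
    have hkx : k ≤ k * x ∨ x = 0 := by
      rcases Nat.eq_zero_or_pos x with h | h
      · exact Or.inr h
      · exact Or.inl (Nat.le_mul_of_pos_right k h)
    have hle : k * x ≤ 2 := by omega
    have hx2 : x ≤ 2 := le_trans hxk hle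
    have hsub : ∀ z : B, dp B 2 z ∈ Submodule.span ℤ (Set.range fun z => dp B 2 z) :=
      fun z => Submodule.subset_span ⟨z, rfl⟩
    have hkpos : 1 ≤ k := Nat.pos_of_ne_zero hk
    interval_cases x
    · -- x = 0
      rw [show mkQ (X ((0 : ℕ), y)) = dp B 0 y from rfl, dp_zero', one_pow, one_mul]
      exact ih (by omega)
    · -- x = 1 : k = 1 or k = 2
      have hk2 : k ≤ 2 := by omega
      clear hxk hkx hle
      interval_cases k
      · -- k = 1 : remaining weight 1
        have hf : W f = 1 := by omega
        obtain ⟨z, hz⟩ := mk_monomial_weight_one B f hf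
        rw [hz, pow_one]
        rw [show mkQ (X ((1 : ℕ), y)) = dp B 1 y from rfl]
        have : dp B 1 y * dp B 1 z = dp B 2 (y + z) - dp B 2 y - dp B 2 z := by
          rw [dp_two_add]; ring
        rw [this]
        exact Submodule.sub_mem _ (Submodule.sub_mem _ (hsub _) (hsub _)) (hsub _)
      · -- k = 2
        have hf : W f = 0 := by omega
        rw [mk_monomial_weight_zero B f hf, mul_one]
        rw [show mkQ (X ((1 : ℕ), y)) = dp B 1 y from rfl, sq, dp_one_mul_dp_one]
        exact Submodule.smul_mem _ _ (hsub _)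
    · -- x = 2 : k = 1
      have hk1 : k = 1 := by omega
      subst hk1
      have hf : W f = 0 := by omega
      rw [mk_monomial_weight_zero B f hf, mul_one, pow_one]
      exact hsub y

theorem dpGrade_two_le_span :
    dpGrade B 2 ≤ Submodule.span ℤ (Set.range fun z => dp B 2 z) := by
  rintro v ⟨p, hp, rfl⟩
  rw [SetLike.mem_coe, mem_weightedHomogeneousSubmodule] at hp
  show (RingQuot.mkAlgHom ℤ (DividedPowerRel B)) p ∈ _
  rw [p.as_sum, map_sum]
  apply Submodule.sum_mem
  intro d hd
  rw [show (monomial d) (coeff d p) = (coeff d p) • (monomial d (1 : ℤ)) by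
    rw [smul_monomial, smul_eq_mul, mul_one], map_smul]
  exact Submodule.smul_mem _ _
    (mk_monomial_weight_two B d (hp (mem_support_iff.mp hd)))

section QRsec
variable {M N : Type} [AddCommGroup M] [AddCommGroup N]

/-- Auxiliary truncated ring `ℤ ⊕ B ⊕ A` with product twisted by a symmetric
bilinear form `ρ`. -/
@[ext] structure QR (M N : Type) [AddCommGroup M] [AddCommGroup N]
    (ρ : M →+ M →+ N) (hρ : ∀ x y, ρ x y = ρ y x) : Type where
  a : ℤ
  b : M
  c : N

namespace QR

variable {ρ : M →+ M →+ N} {hρ : ∀ x y, ρ x y = ρ y x}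

instance : Add (QR M N ρ hρ) := ⟨fun p q => ⟨p.a + q.a, p.b + q.b, p.c + q.c⟩⟩
instance : Zero (QR M N ρ hρ) := ⟨⟨0, 0, 0⟩⟩
instance : Neg (QR M N ρ hρ) := ⟨fun p => ⟨-p.a, -p.b, -p.c⟩⟩
instance : One (QR M N ρ hρ) := ⟨⟨1, 0, 0⟩⟩
instance : Mul (QR M N ρ hρ) :=
  ⟨fun p q => ⟨p.a * q.a, p.a • q.b + q.a • p.b, p.a • q.c + q.a • p.c + ρ p.b q.b⟩⟩

@[simp] lemma add_a (p q : QR M N ρ hρ) : (p + q).a = p.a + q.a := rfl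
@[simp] lemma add_b (p q : QR M N ρ hρ) : (p + q).b = p.b + q.b := rfl
@[simp] lemma add_c (p q : QR M N ρ hρ) : (p + q).c = p.c + q.c := rfl
@[simp] lemma zero_a : (0 : QR M N ρ hρ).a = 0 := rfl
@[simp] lemma zero_b : (0 : QR M N ρ hρ).b = 0 := rfl
@[simp] lemma zero_c : (0 : QR M N ρ hρ).c = 0 := rfl
@[simp] lemma neg_a (p : QR M N ρ hρ) : (-p).a = -p.a := rfl
@[simp] lemma neg_b (p : QR M N ρ hρ) : (-p).b = -p.b := rfl
@[simp] lemma neg_c (p : QR M N ρ hρ) : (-p).c = -p.c := rfl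
@[simp] lemma one_a : (1 : QR M N ρ hρ).a = 1 := rfl
@[simp] lemma one_b : (1 : QR M N ρ hρ).b = 0 := rfl
@[simp] lemma one_c : (1 : QR M N ρ hρ).c = 0 := rfl
@[simp] lemma mul_a (p q : QR M N ρ hρ) : (p * q).a = p.a * q.a := rfl
@[simp] lemma mul_b (p q : QR M N ρ hρ) : (p * q).b = p.a • q.b + q.a • p.b := rfl
@[simp] lemma mul_c (p q : QR M N ρ hρ) :
    (p * q).c = p.a • q.c + q.a • p.c + ρ p.b q.b := rfl

instance : SMul ℕ (QR M N ρ hρ) := ⟨fun n p => ⟨n • p.a, n • p.b, n • p.c⟩⟩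
instance : SMul ℤ (QR M N ρ hρ) := ⟨fun n p => ⟨n • p.a, n • p.b, n • p.c⟩⟩

@[simp] lemma nsmul_a (n : ℕ) (p : QR M N ρ hρ) : (n • p).a = n • p.a := rfl
@[simp] lemma nsmul_b (n : ℕ) (p : QR M N ρ hρ) : (n • p).b = n • p.b := rfl
@[simp] lemma nsmul_c (n : ℕ) (p : QR M N ρ hρ) : (n • p).c = n • p.c := rfl
@[simp] lemma zsmul_a (n : ℤ) (p : QR M N ρ hρ) : (n • p).a = n • p.a := rfl
@[simp] lemma zsmul_b (n : ℤ) (p : QR M N ρ hρ) : (n • p).b = n • p.b := rfl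
@[simp] lemma zsmul_c (n : ℤ) (p : QR M N ρ hρ) : (n • p).c = n • p.c := rfl

instance : NatCast (QR M N ρ hρ) := ⟨fun n => ⟨(n : ℤ), 0, 0⟩⟩
instance : IntCast (QR M N ρ hρ) := ⟨fun k => ⟨k, 0, 0⟩⟩

@[simp] lemma natCast_a (n : ℕ) : ((n : QR M N ρ hρ)).a = n := rfl
@[simp] lemma natCast_b (n : ℕ) : ((n : QR M N ρ hρ)).b = 0 := rfl
@[simp] lemma natCast_c (n : ℕ) : ((n : QR M N ρ hρ)).c = 0 := rfl
@[simp] lemma intCast_a (k : ℤ) : ((k : QR M N ρ hρ)).a = k := rfl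
@[simp] lemma intCast_b (k : ℤ) : ((k : QR M N ρ hρ)).b = 0 := rfl
@[simp] lemma intCast_c (k : ℤ) : ((k : QR M N ρ hρ)).c = 0 := rfl

@[simp] lemma ofNat_a (n : ℕ) [n.AtLeastTwo] :
    ((OfNat.ofNat n : QR M N ρ hρ)).a = OfNat.ofNat n := rfl
@[simp] lemma ofNat_b (n : ℕ) [n.AtLeastTwo] :
    ((OfNat.ofNat n : QR M N ρ hρ)).b = 0 := rfl
@[simp] lemma ofNat_c (n : ℕ) [n.AtLeastTwo] :
    ((OfNat.ofNat n : QR M N ρ hρ)).c = 0 := rfl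

instance : CommRing (QR M N ρ hρ) where
  natCast n := (n : QR M N ρ hρ)
  intCast k := (k : QR M N ρ hρ)
  natCast_zero := by ext <;> simp
  natCast_succ n := by ext <;> simp
  intCast_ofNat n := by ext <;> simp
  intCast_negSucc n := by ext <;> simp [Int.negSucc_eq]
  nsmul n p := n • p
  zsmul n p := n • p
  nsmul_zero p := by ext <;> simp
  nsmul_succ n p := by ext <;> simp [succ_nsmul, add_mul]
  zsmul_zero' p := by ext <;> simp
  zsmul_succ' n p := by ext <;> simp [add_zsmul, add_mul] <;> abel
  zsmul_neg' n p := by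
    ext <;> simp [Int.negSucc_eq, neg_zsmul, add_zsmul, neg_mul, add_mul, succ_nsmul] <;> abel
  add_assoc p q r := by ext <;> simp <;> abel
  zero_add p := by ext <;> simp
  add_zero p := by ext <;> simp
  add_comm p q := by ext <;> simp <;> abel
  left_distrib p q r := by
    ext <;> simp [mul_add, add_smul, smul_add, map_add] <;> abel
  right_distrib p q r := by
    ext <;> simp [add_mul, add_smul, smul_add, map_add] <;> abel
  zero_mul p := by ext <;> simp
  mul_zero p := by ext <;> simp
  mul_assoc p q r := by
    ext
    · simp [Int.mul_assoc]
    · simp [smul_smul, smul_add] ; module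
    · simp [smul_smul, smul_add, map_add, map_zsmul, AddMonoidHom.smul_apply] ; module
  one_mul p := by ext <;> simp
  mul_one p := by ext <;> simp
  neg_add_cancel p := by ext <;> simp
  mul_comm p q := by
    ext
    · simp [Int.mul_comm]
    · simp ; abel
    · simp [hρ p.b q.b] ; abel

/-- Projection onto the third component, as an additive hom. -/
def cHom : QR M N ρ hρ →+ N where
  toFun := QR.c
  map_zero' := rfl
  map_add' _ _ := rfl

@[simp] lemma cHom_apply (p : QR M N ρ hρ) : cHom p = p.c := rfl

@[simp] lemma pow_a (p : QR M N ρ hρ) (n : ℕ) : (p ^ n).a = p.a ^ n := by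
  induction n with
  | zero => simp
  | succ n ih => rw [pow_succ, pow_succ, mul_a, ih]

end QR


end QRsec

-- ### quadratic maps

section Quadratic

variable {B}
variable {A : Type} [AddCommGroup A] (τ : B → A)

/-- The polar form of a quadratic map, as a bi-additive monoid hom. -/
def polarHom
    (h2 : ∀ x₁ x₂ y : B, τ (x₁ + x₂ + y) - τ (x₁ + x₂) - τ y =
      (τ (x₁ + y) - τ x₁ - τ y) + (τ (x₂ + y) - τ x₂ - τ y))
    (h3 : ∀ x y₁ y₂ : B, τ (x + (y₁ + y₂)) - τ x - τ (y₁ + y₂) =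
      (τ (x + y₁) - τ x - τ y₁) + (τ (x + y₂) - τ x - τ y₂)) : B →+ B →+ A :=
  AddMonoidHom.mk' (fun x => AddMonoidHom.mk' (fun y => τ (x + y) - τ x - τ y) (h3 x))
    (fun x₁ x₂ => AddMonoidHom.ext fun y => h2 x₁ x₂ y)

variable
  (h1 : ∀ x : B, τ (-x) = τ x)
  (h2 : ∀ x₁ x₂ y : B, τ (x₁ + x₂ + y) - τ (x₁ + x₂) - τ y =
      (τ (x₁ + y) - τ x₁ - τ y) + (τ (x₂ + y) - τ x₂ - τ y))
  (h3 : ∀ x y₁ y₂ : B, τ (x + (y₁ + y₂)) - τ x - τ (y₁ + y₂) =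
      (τ (x + y₁) - τ x - τ y₁) + (τ (x + y₂) - τ x - τ y₂))

include h1 h2 h3

theorem polarHom_apply (x y : B) :
    polarHom τ h2 h3 x y = τ (x + y) - τ x - τ y := rfl

theorem polarHom_symm (x y : B) : polarHom τ h2 h3 x y = polarHom τ h2 h3 y x := by
  rw [polarHom_apply τ h1 h2 h3, polarHom_apply τ h1 h2 h3, add_comm x y]
  abel

theorem tau_zero : τ 0 = 0 := by
  have h : polarHom τ h2 h3 0 0 = 0 := by rw [map_zero]
  rw [polarHom_apply τ h1 h2 h3] at h
  rw [add_zero] at h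
  have h' : - τ 0 = 0 := by rw [← h]; abel
  simpa using h'

theorem polarHom_self (x : B) : polarHom τ h2 h3 x x = τ x + τ x := by
  have ha : polarHom τ h2 h3 x (-x) = - polarHom τ h2 h3 x x := map_neg _ _
  rw [polarHom_apply τ h1 h2 h3, add_neg_cancel, tau_zero τ h1 h2 h3, h1] at ha
  have : - (τ x + τ x) = - polarHom τ h2 h3 x x := by rw [← ha]; abel
  exact (neg_injective this).symm

theorem tau_nsmul (n : ℕ) (x : B) : τ (n • x) = n ^ 2 • τ x := by
  induction n with
  | zero => simpa using tau_zero τ h1 h2 h3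
  | succ n ih =>
    have hp : polarHom τ h2 h3 (n • x) x = n • polarHom τ h2 h3 x x := by
      rw [map_nsmul]; rfl
    have key : τ (n • x + x) = polarHom τ h2 h3 (n • x) x + τ (n • x) + τ x := by
      rw [polarHom_apply τ h1 h2 h3]; abel
    rw [succ_nsmul, key, hp, ih, polarHom_self τ h1 h2 h3,
      show (n + 1) ^ 2 = n ^ 2 + (n + n) + 1 by ring, add_nsmul, add_nsmul, one_nsmul,
      add_nsmul, smul_add]
    abel

theorem tau_zsmul (k : ℤ) (x : B) : τ (k • x) = k ^ 2 • τ x := by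
  rcases Int.eq_nat_or_neg k with ⟨n, rfl | rfl⟩
  · rw [natCast_zsmul, tau_nsmul τ h1 h2 h3, show ((n : ℤ)) ^ 2 = ((n ^ 2 : ℕ) : ℤ) by
      push_cast; ring, natCast_zsmul]
  · rw [neg_zsmul, natCast_zsmul, h1, tau_nsmul τ h1 h2 h3,
      show (-(n : ℤ)) ^ 2 = ((n ^ 2 : ℕ) : ℤ) by push_cast; ring, natCast_zsmul]

/-- The variable assignment for the evaluation into the auxiliary ring. -/
def vmap : ℕ × B → QR B A (polarHom τ h2 h3) (polarHom_symm τ h1 h2 h3) := fun p =>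
  match p with
  | (0, _) => 1
  | (1, x) => ⟨0, x, 0⟩
  | (2, x) => ⟨0, 0, τ p.2⟩
  | _ => 0

theorem vmap_ge_three (j : ℕ) (hj : 3 ≤ j) (x : B) : vmap τ h1 h2 h3 (j, x) = 0 := by
  rcases j with _ | _ | _ | j
  · omega
  · omega
  · omega
  · rfl

theorem vmap_mul_eq_zero (i j : ℕ) (hij : 3 ≤ i + j) (x y : B) :
    vmap τ h1 h2 h3 (i, x) * vmap τ h1 h2 h3 (j, y) = 0 := by
  rcases Nat.lt_or_ge i 3 with hi | hi
  · rcases Nat.lt_or_ge j 3 with hj | hj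
    · interval_cases i <;> interval_cases j <;> first
      | omega
      | (ext <;> simp [vmap])
    · rw [vmap_ge_three τ h1 h2 h3 j hj, mul_zero]
  · rw [vmap_ge_three τ h1 h2 h3 i hi, zero_mul]

theorem aeval_vmap_rel {p q : MvPolynomial (ℕ × B) ℤ} (h : DividedPowerRel B p q) :
    aeval (vmap τ h1 h2 h3) p = aeval (vmap τ h1 h2 h3) q := by
  induction h with
  | zero x => simp only [aeval_X, map_one]; rfl
  | smul k n x =>
    rw [aeval_X, map_smul, aeval_X]
    rcases n with _ | _ | _ | n
    · show (1 : QR B A _ _) = k ^ 0 • 1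
      ext <;> simp
    · show (⟨0, k • x, 0⟩ : QR B A _ _) = k ^ 1 • ⟨0, x, 0⟩
      ext <;> simp
    · show (⟨0, 0, τ (k • x)⟩ : QR B A _ _) = k ^ 2 • ⟨0, 0, τ x⟩
      ext <;> simp [tau_zsmul τ h1 h2 h3]
    · show (0 : QR B A _ _) = k ^ (n + 1 + 1 + 1) • 0
      rw [smul_zero]
  | add n x y =>
    rw [aeval_X, map_sum]
    simp only [map_mul, aeval_X]
    rcases n with _ | _ | _ | n
    · rw [Finset.sum_range_one]
      show (1 : QR B A _ _) = 1 * 1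
      rw [one_mul]
    · rw [Finset.sum_range_succ, Finset.sum_range_one]
      show (⟨0, x + y, 0⟩ : QR B A _ _) = 1 * ⟨0, y, 0⟩ + ⟨0, x, 0⟩ * 1
      rw [one_mul, mul_one]
      ext <;> simp [add_comm]
    · rw [Finset.sum_range_succ, Finset.sum_range_succ, Finset.sum_range_one]
      show (⟨0, 0, τ (x + y)⟩ : QR B A _ _) =
          1 * ⟨0, 0, τ y⟩ + ⟨0, x, 0⟩ * ⟨0, y, 0⟩ + ⟨0, 0, τ x⟩ * 1
      rw [one_mul, mul_one]
      ext <;> simp [polarHom_apply τ h1 h2 h3] <;> abel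
    · rw [vmap_ge_three τ h1 h2 h3 _ (by omega), Finset.sum_eq_zero]
      intro i hi
      rw [Finset.mem_range] at hi
      exact vmap_mul_eq_zero τ h1 h2 h3 i _ (by omega) x y
  | mul m n x =>
    rw [map_mul, aeval_X, aeval_X, map_nsmul, aeval_X]
    rcases Nat.lt_or_ge (m + n) 3 with hmn | hmn
    · have hm : m ≤ 2 := by omega
      have hn : n ≤ 2 := by omega
      interval_cases m <;> interval_cases n <;> first
        | omega
        | (ext <;> simp [vmap, polarHom_self τ h1 h2 h3, two_smul, two_nsmul] <;>
            try abel)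
    · rw [vmap_mul_eq_zero τ h1 h2 h3 m n hmn, vmap_ge_three τ h1 h2 h3 _ hmn, smul_zero]

/-- The evaluation algebra hom on the divided power algebra. -/
noncomputable def qrHom : DividedPowerAlgebra' B →ₐ[ℤ] QR B A (polarHom τ h2 h3)
    (polarHom_symm τ h1 h2 h3) :=
  RingQuot.liftAlgHom ℤ ⟨aeval (vmap τ h1 h2 h3), fun _ _ h => aeval_vmap_rel τ h1 h2 h3 h⟩

theorem qrHom_dp (n : ℕ) (x : B) :
    qrHom τ h1 h2 h3 (dp B n x) = vmap τ h1 h2 h3 (n, x) := by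
  rw [dp, qrHom, RingQuot.liftAlgHom_mkAlgHom_apply, aeval_X]

end Quadratic


/-- For abelian groups `B`, `A`, the map `f ↦ (x ↦ f (γ₂ x))` is an isomorphism of
abelian groups from `Hom(Γ₂B, A)` onto the group of quadratic maps `B → A`: it is
additive, injective, and its range is exactly the set of functions `τ : B → A` with
`τ(-x) = τ(x)` whose associated polar form `(x, y) ↦ τ(x+y) - τ(x) - τ(y)` is additive
in each variable. -/
theorem hom_dpGrade_two_equiv_quadratic_maps (A : Type) [AddCommGroup A] :
    let Φ : ((dpGrade B 2) →+ A) → (B → A) :=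
      fun f x => f ⟨dp B 2 x, dp_mem_dpGrade B 2 x⟩
    (∀ f g : (dpGrade B 2) →+ A, Φ (f + g) = Φ f + Φ g) ∧
    Function.Injective Φ ∧
    Set.range Φ =
      {τ : B → A |
        (∀ x : B, τ (-x) = τ x) ∧
        (∀ x₁ x₂ y : B,
          τ (x₁ + x₂ + y) - τ (x₁ + x₂) - τ y =
            (τ (x₁ + y) - τ x₁ - τ y) + (τ (x₂ + y) - τ x₂ - τ y)) ∧
        (∀ x y₁ y₂ : B,
          τ (x + (y₁ + y₂)) - τ x - τ (y₁ + y₂) =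
            (τ (x + y₁) - τ x - τ y₁) + (τ (x + y₂) - τ x - τ y₂))} := by
  intro Φ
  have hle : Submodule.span ℤ (Set.range fun z => dp B 2 z) ≤ dpGrade B 2 :=
    Submodule.span_le.mpr (by rintro _ ⟨z, rfl⟩; exact dp_mem_dpGrade B 2 z)
  -- the polar identity
  have hpolar : ∀ (f : (dpGrade B 2) →+ A) (x y : B),
      Φ f (x + y) - Φ f x - Φ f y = f ⟨dp B 1 x * dp B 1 y, dp1_mul_dp1_mem B x y⟩ := by
    intro f x y
    have e1 : (⟨dp B 2 (x + y), dp_mem_dpGrade B 2 _⟩ : dpGrade B 2) -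
        ⟨dp B 2 x, dp_mem_dpGrade B 2 x⟩ - ⟨dp B 2 y, dp_mem_dpGrade B 2 y⟩ =
        ⟨dp B 1 x * dp B 1 y, dp1_mul_dp1_mem B x y⟩ := by
      apply Subtype.ext
      show dp B 2 (x + y) - dp B 2 x - dp B 2 y = dp B 1 x * dp B 1 y
      rw [dp_two_add]
      ring
    show f _ - f _ - f _ = _
    rw [← map_sub, ← map_sub, e1]
  refine ⟨fun f g => rfl, ?_, ?_⟩
  · -- injectivity
    intro f g h
    have key : ∀ v, v ∈ Submodule.span ℤ (Set.range fun z => dp B 2 z) →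
        ∀ hv : v ∈ dpGrade B 2, f ⟨v, hv⟩ = g ⟨v, hv⟩ := by
      intro v hv'
      induction hv' using Submodule.span_induction with
      | mem w hw =>
        obtain ⟨z, rfl⟩ := hw
        intro hv
        exact congrFun h z
      | zero =>
        intro hv
        rw [show (⟨0, hv⟩ : dpGrade B 2) = 0 from rfl, map_zero, map_zero]
      | add w u hw hu ihw ihu =>
        intro hv
        rw [show (⟨w + u, hv⟩ : dpGrade B 2) = ⟨w, hle hw⟩ + ⟨u, hle hu⟩ from rfl,
          map_add, map_add, ihw, ihu]
      | smul k w hw ihw =>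
        intro hv
        rw [show (⟨k • w, hv⟩ : dpGrade B 2) = k • (⟨w, hle hw⟩ : dpGrade B 2) from rfl,
          map_zsmul, map_zsmul, ihw]
    refine DFunLike.ext _ _ fun v => ?_
    obtain ⟨v, hv⟩ := v
    exact key v (dpGrade_two_le_span B hv) hv
  · -- range
    ext τ
    constructor
    · rintro ⟨f, rfl⟩
      refine ⟨?_, ?_, ?_⟩
      · intro x
        show f _ = f _
        congr 1
        exact Subtype.ext (dp_two_neg B x)
      · intro x₁ x₂ y
        rw [hpolar f (x₁ + x₂) y, hpolar f x₁ y, hpolar f x₂ y, ← map_add]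
        congr 1
        apply Subtype.ext
        show dp B 1 (x₁ + x₂) * dp B 1 y = dp B 1 x₁ * dp B 1 y + dp B 1 x₂ * dp B 1 y
        rw [dp_one_add, add_mul]
      · intro x y₁ y₂
        rw [hpolar f x (y₁ + y₂), hpolar f x y₁, hpolar f x y₂, ← map_add]
        congr 1
        apply Subtype.ext
        show dp B 1 x * dp B 1 (y₁ + y₂) = dp B 1 x * dp B 1 y₁ + dp B 1 x * dp B 1 y₂
        rw [dp_one_add, mul_add]
    · rintro ⟨hτ1, hτ2, hτ3⟩
      refine ⟨QR.cHom.comp ((qrHom τ hτ1 hτ2 hτ3).toAddMonoidHom.comp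
        ((dpGrade B 2).subtype.toAddMonoidHom)), ?_⟩
      funext x
      show QR.cHom (qrHom τ hτ1 hτ2 hτ3 (dp B 2 x)) = τ x
      rw [qrHom_dp]
      rfl
end

section
/- Let B be an abelian group and let Γ₃B denote the degree-3 homogeneous component of the divided power algebra of the ℤ-module B. Then Γ₃B is generated as an abelian group by the set consisting of the elements γ₃(x) for x ∈ B together with the products γ₂(x)·γ₁(y) for x, y ∈ B (where γₙ(x) is the n-th divided power of x and the product is taken in the divided power algebra). -/
set_option synthInstance.maxHeartbeats 1000000
set_option maxHeartbeats 1000000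

open MvPolynomial

variable (B : Type) [AddCommGroup B]

namespace DpAux

variable {B}

theorem dp_zero (x : B) : dp B 0 x = 1 := by
  have := RingQuot.mkAlgHom_rel ℤ (DividedPowerRel.zero (B := B) x)
  simpa [dp] using this

theorem dp_add (n : ℕ) (x y : B) :
    dp B n (x + y) = ∑ i ∈ Finset.range (n + 1), dp B i x * dp B (n - i) y := by
  have := RingQuot.mkAlgHom_rel ℤ (DividedPowerRel.add (B := B) n x y)
  simpa [dp, map_sum, map_mul] using this

theorem dp_one_mul_dp_one (x y : B) :
    dp B 1 x * dp B 1 y = dp B 2 (x + y) - dp B 2 x - dp B 2 y := by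
  have h := dp_add 2 x y
  rw [Finset.sum_range_succ, Finset.sum_range_succ, Finset.sum_range_one] at h
  simp only [dp_zero, one_mul, mul_one, Nat.sub_self] at h
  rw [h]; ring

/-- The subgroup generated by third divided powers and products γ₂·γ₁. -/
noncomputable def T : AddSubgroup (DividedPowerAlgebra' B) :=
  AddSubgroup.closure
    ({v | ∃ x : B, v = dp B 3 x} ∪ {v | ∃ x y : B, v = dp B 2 x * dp B 1 y})

theorem mem3 (x : B) : dp B 3 x ∈ T (B := B) :=
  AddSubgroup.subset_closure (Or.inl ⟨x, rfl⟩)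

theorem mem21 (x y : B) : dp B 2 x * dp B 1 y ∈ T (B := B) :=
  AddSubgroup.subset_closure (Or.inr ⟨x, y, rfl⟩)

theorem mem111 (x y z : B) : dp B 1 x * dp B 1 y * dp B 1 z ∈ T (B := B) := by
  rw [dp_one_mul_dp_one, sub_mul, sub_mul]
  exact sub_mem (sub_mem (mem21 _ _) (mem21 _ _)) (mem21 _ _)

theorem S0 (s : Multiset (ℕ × B)) (hs : (s.map Prod.fst).sum = 0) :
    (s.map fun p => dp B p.1 p.2).prod = 1 := by
  induction s using Multiset.induction with
  | empty => simp
  | cons a t ih =>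
    obtain ⟨n, x⟩ := a
    simp only [Multiset.map_cons, Multiset.sum_cons, Multiset.prod_cons] at hs ⊢
    have hn : n = 0 := by omega
    have ht : (t.map Prod.fst).sum = 0 := by omega
    rw [hn, dp_zero, one_mul, ih ht]

theorem S1 (s : Multiset (ℕ × B)) (hs : (s.map Prod.fst).sum = 1) :
    ∃ y : B, (s.map fun p => dp B p.1 p.2).prod = dp B 1 y := by
  induction s using Multiset.induction with
  | empty => simp at hs
  | cons a t ih =>
    obtain ⟨n, x⟩ := a
    simp only [Multiset.map_cons, Multiset.sum_cons, Multiset.prod_cons] at hs ⊢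
    have hn : n ≤ 1 := by omega
    interval_cases n
    · obtain ⟨y, hy⟩ := ih (by omega)
      exact ⟨y, by rw [dp_zero, one_mul, hy]⟩
    · exact ⟨x, by rw [S0 t (by omega), mul_one]⟩

theorem S2 (s : Multiset (ℕ × B)) (hs : (s.map Prod.fst).sum = 2) :
    (∃ y : B, (s.map fun p => dp B p.1 p.2).prod = dp B 2 y) ∨
    (∃ y z : B, (s.map fun p => dp B p.1 p.2).prod = dp B 1 y * dp B 1 z) := by
  induction s using Multiset.induction with
  | empty => simp at hs
  | cons a t ih =>
    obtain ⟨n, x⟩ := a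
    simp only [Multiset.map_cons, Multiset.sum_cons, Multiset.prod_cons] at hs ⊢
    have hn : n ≤ 2 := by omega
    interval_cases n
    · rw [dp_zero, one_mul]
      exact ih (by omega)
    · obtain ⟨y, hy⟩ := S1 t (by omega)
      exact Or.inr ⟨x, y, by rw [hy]⟩
    · exact Or.inl ⟨x, by rw [S0 t (by omega), mul_one]⟩

theorem S3 (s : Multiset (ℕ × B)) (hs : (s.map Prod.fst).sum = 3) :
    (s.map fun p => dp B p.1 p.2).prod ∈ T (B := B) := by
  induction s using Multiset.induction with
  | empty => simp at hs
  | cons a t ih =>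
    obtain ⟨n, x⟩ := a
    simp only [Multiset.map_cons, Multiset.sum_cons, Multiset.prod_cons] at hs ⊢
    have hn : n ≤ 3 := by omega
    interval_cases n
    · rw [dp_zero, one_mul]
      exact ih (by omega)
    · rcases S2 t (by omega) with ⟨y, hy⟩ | ⟨y, z, hy⟩
      · rw [hy, mul_comm]
        exact mem21 y x
      · rw [hy, ← mul_assoc]
        exact mem111 x y z
    · obtain ⟨y, hy⟩ := S1 t (by omega)
      rw [hy]
      exact mem21 x y
    · rw [S0 t (by omega), mul_one]
      exact mem3 x

theorem map_toMultiset_prod {α M : Type*} [CommMonoid M] (d : α →₀ ℕ) (f : α → M) :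
    (d.toMultiset.map f).prod = d.prod fun a k => f a ^ k := by
  induction d using Finsupp.induction with
  | zero => simp
  | single_add a n g hag hn ih =>
    have h1 : Multiset.map f ((Finsupp.single a n + g).toMultiset) =
        Multiset.replicate n (f a) + Multiset.map f g.toMultiset := by
      rw [Finsupp.toMultiset_add, Finsupp.toMultiset_single, Multiset.nsmul_singleton,
        Multiset.map_add, Multiset.map_replicate]
    rw [h1, Multiset.prod_add, Multiset.prod_replicate, ih,
      Finsupp.prod_add_index' (fun i => pow_zero (f i)) (fun i k l => pow_add (f i) k l)]
    congr 1
    exact (Finsupp.prod_single_index (h := fun i k => f i ^ k) (pow_zero (f a))).symm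

theorem map_toMultiset_sum {α : Type*} (d : α →₀ ℕ) (f : α → ℕ) :
    (d.toMultiset.map f).sum = d.sum fun a k => k • f a := by
  induction d using Finsupp.induction with
  | zero => simp
  | single_add a n g hag hn ih =>
    have h1 : Multiset.map f ((Finsupp.single a n + g).toMultiset) =
        Multiset.replicate n (f a) + Multiset.map f g.toMultiset := by
      rw [Finsupp.toMultiset_add, Finsupp.toMultiset_single, Multiset.nsmul_singleton,
        Multiset.map_add, Multiset.map_replicate]
    rw [h1, Multiset.sum_add, Multiset.sum_replicate, ih,
      Finsupp.sum_add_index' (fun i => zero_smul ℕ (f i)) (fun k l i => add_smul l i (f k))]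
    congr 1
    exact (Finsupp.sum_single_index (h := fun i k => k • f i) (zero_smul ℕ (f a))).symm

theorem mem_T_of_mem_dpGrade {y : DividedPowerAlgebra' B} (hy : y ∈ dpGrade B 3) :
    y ∈ T (B := B) := by
  obtain ⟨p, hp, rfl⟩ := hy
  replace hp : p.IsWeightedHomogeneous Prod.fst 3 := hp
  have heq : (RingQuot.mkAlgHom ℤ (DividedPowerRel B)).toLinearMap p =
      RingQuot.mkAlgHom ℤ (DividedPowerRel B) p := rfl
  change (RingQuot.mkAlgHom ℤ (DividedPowerRel B)) p ∈ T
  rw [p.as_sum, map_sum]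
  apply AddSubgroup.sum_mem
  intro d hd
  have hw : Finsupp.weight Prod.fst d = 3 := hp (mem_support_iff.mp hd)
  rw [monomial_eq, map_mul]
  have hC : (RingQuot.mkAlgHom ℤ (DividedPowerRel B)) (C (coeff d p)) =
      (Int.cast (coeff d p) : DividedPowerAlgebra' B) := by
    rw [← MvPolynomial.algebraMap_eq, AlgHom.commutes]
    simp
  rw [hC]
  have hprod : (RingQuot.mkAlgHom ℤ (DividedPowerRel B)) (d.prod fun n e => X n ^ e) =
      d.prod fun n e => dp B n.1 n.2 ^ e := by
    rw [Finsupp.prod, Finsupp.prod, map_prod]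
    exact Finset.prod_congr rfl fun i _ => by rw [map_pow]; rfl
  rw [hprod, ← zsmul_eq_mul]
  apply AddSubgroup.zsmul_mem
  rw [← map_toMultiset_prod]
  apply S3
  rw [map_toMultiset_sum, ← Finsupp.weight_apply]
  exact hw

end DpAux

/-- `Γ₃B` is generated as an abelian group by the third divided powers `γ₃(x)` together
with the products `γ₂(x)·γ₁(y)`, for `x, y ∈ B`. -/
theorem dpGrade_three_generated_by_dp :
    AddSubgroup.closure
      {a : dpGrade B 3 |
        (∃ x : B, a = ⟨dp B 3 x, dp_mem_dpGrade B 3 x⟩) ∨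
        (∃ x y : B, a = ⟨dp B 2 x * dp B 1 y, dp_mul_dp_mem_dpGrade B 2 1 x y⟩)} = ⊤ := by
  rw [AddSubgroup.eq_top_iff']
  intro a
  set S : Set (dpGrade B 3) :=
    {a : dpGrade B 3 |
      (∃ x : B, a = ⟨dp B 3 x, dp_mem_dpGrade B 3 x⟩) ∨
      (∃ x y : B, a = ⟨dp B 2 x * dp B 1 y, dp_mul_dp_mem_dpGrade B 2 1 x y⟩)} with hS
  set f : (dpGrade B 3) →+ DividedPowerAlgebra' B :=
    ((dpGrade B 3).subtype).toAddMonoidHom with hf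
  have himg : f '' S =
      ({v | ∃ x : B, v = dp B 3 x} ∪ {v | ∃ x y : B, v = dp B 2 x * dp B 1 y}) := by
    ext v
    constructor
    · rintro ⟨b, (⟨x, rfl⟩ | ⟨x, y, rfl⟩), rfl⟩
      · exact Or.inl ⟨x, rfl⟩
      · exact Or.inr ⟨x, y, rfl⟩
    · rintro (⟨x, rfl⟩ | ⟨x, y, rfl⟩)
      · exact ⟨⟨dp B 3 x, dp_mem_dpGrade B 3 x⟩, Or.inl ⟨x, rfl⟩, rfl⟩
      · exact ⟨⟨dp B 2 x * dp B 1 y, dp_mul_dp_mem_dpGrade B 2 1 x y⟩,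
          Or.inr ⟨x, y, rfl⟩, rfl⟩
  have hmap : (AddSubgroup.closure S).map f = DpAux.T (B := B) := by
    rw [AddMonoidHom.map_closure, himg]; rfl
  have hmem : f a ∈ (AddSubgroup.closure S).map f := by
    rw [hmap]
    exact DpAux.mem_T_of_mem_dpGrade a.2
  obtain ⟨b, hb, hba⟩ := hmem
  have : b = a := Subtype.ext hba
  rwa [this] at hb
end
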